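/- Let f be the operation on {1,...,n} (n > 6) defined for 1 ≤ a < b < c ≤ n by f(a,b,c) = a if ⌈(a+c)/2⌉ < b, f(a,b,c) = b if b ∈ {⌊(a+c)/2⌋, ⌈(a+c)/2⌉}, and f(a,b,c) = c if b < ⌊(a+c)/2⌋, extended by total symmetry and the majority rule. Then f satisfies the identity f(f(x,y,z),y,z) = f(x,y,z) for all x, y, z. -/
import Mathlib


/-- The value of the interval-midpoint majority operation on a sorted triple
`a ≤ b ≤ c` (including the majority rule when two entries coincide);
`(a+c)/2` is `⌊(a+c)/2⌋` and `(a+c+1)/2` is `⌈(a+c)/2⌉`. -/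
def fbase (a b c : ℕ) : ℕ :=
  if a = b ∨ b = c then b
  else if (a + c + 1) / 2 < b then a
  else if b = (a + c) / 2 ∨ b = (a + c + 1) / 2 then b
  else c

/-- The middle element of a triple of naturals. -/
def mid3 (x y z : ℕ) : ℕ := x + y + z - max x (max y z) - min x (min y z)

/-- The interval-midpoint majority operation, extended to all triples by
total symmetry (via sorting) and the majority rule. -/
def fA (x y z : ℕ) : ℕ := fbase (min x (min y z)) (mid3 x y z) (max x (max y z))

lemma fA_mem (x y z : ℕ) : fA x y z = x ∨ fA x y z = y ∨ fA x y z = z := by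
  unfold fA fbase mid3
  split_ifs <;> omega

lemma fA_maj_left (a b : ℕ) : fA a a b = a := by
  unfold fA fbase mid3
  split_ifs <;> omega

lemma fA_maj_outer (a b : ℕ) : fA a b a = a := by
  unfold fA fbase mid3
  split_ifs <;> omega

/-- For `n > 6`, the interval-midpoint majority operation on `{1,…,n}` satisfies
the identity `f(f(x,y,z),y,z) = f(x,y,z)`. -/
theorem midpoint_operation_idempotent_identity (n : ℕ) (hn : 6 < n)
    (x y z : ℕ) (hx : 1 ≤ x) (hx' : x ≤ n) (hy : 1 ≤ y) (hy' : y ≤ n)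
    (hz : 1 ≤ z) (hz' : z ≤ n) :
    fA (fA x y z) y z = fA x y z := by
  rcases fA_mem x y z with h | h | h <;> rw [h]
  · exact h
  · exact fA_maj_left y z
  · exact fA_maj_outer z y
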